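/- (Second family, Case λ₃ ≠ 0, λ₁ = 0, equation (3.10)) Under the ruled hypothesis Q = −uP, u_y + u·u_x = 0, suppose Δx = λ₁·x, Δy = λ₂·y, Δf = λ₃·f on D for real constants with λ₃ ≠ 0, λ₁ = 0, and suppose P is nowhere zero on D. Then H₁ = uW, i.e. f_xx + f_yy = u·(1 + P²(1 + u²)), the constant λ₂ is nonzero, and f satisfies the partial differential equation f_xx + f_yy = ½(λ₂·xy − 2λ₃·f)·(1 + (f_x + y/2)²(1 + u²))² on D. -/

import Mathlib

noncomputable section

/-- Partial derivative with respect to the first (x) variable. -/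
def pdx (f : ℝ × ℝ → ℝ) : ℝ × ℝ → ℝ := fun p => fderiv ℝ f p (1, 0)

/-- Partial derivative with respect to the second (y) variable. -/
def pdy (f : ℝ × ℝ → ℝ) : ℝ × ℝ → ℝ := fun p => fderiv ℝ f p (0, 1)

/-- `P = f_x + y/2`. -/
def Pf (f : ℝ × ℝ → ℝ) : ℝ × ℝ → ℝ := fun p => pdx f p + p.2 / 2

/-- `Q = f_y - x/2`. -/
def Qf (f : ℝ × ℝ → ℝ) : ℝ × ℝ → ℝ := fun p => pdy f p - p.1 / 2

/-- First fundamental form coefficient `E = 1 + P²`. -/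
def Ef (f : ℝ × ℝ → ℝ) : ℝ × ℝ → ℝ := fun p => 1 + Pf f p ^ 2

/-- First fundamental form coefficient `F = P·Q`. -/
def Ff (f : ℝ × ℝ → ℝ) : ℝ × ℝ → ℝ := fun p => Pf f p * Qf f p

/-- First fundamental form coefficient `G = 1 + Q²`. -/
def Gf (f : ℝ × ℝ → ℝ) : ℝ × ℝ → ℝ := fun p => 1 + Qf f p ^ 2

/-- `W = √(EG − F²) = √(1 + P² + Q²)`. -/
def Wf (f : ℝ × ℝ → ℝ) : ℝ × ℝ → ℝ := fun p => Real.sqrt (1 + Pf f p ^ 2 + Qf f p ^ 2)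

/-- Second fundamental form coefficient `L = (f_xx + PQ)/W`. -/
def Lf (f : ℝ × ℝ → ℝ) : ℝ × ℝ → ℝ := fun p => (pdx (pdx f) p + Pf f p * Qf f p) / Wf f p

/-- Second fundamental form coefficient `M = (f_xy + (Q² − P²)/2)/W`. -/
def Mf (f : ℝ × ℝ → ℝ) : ℝ × ℝ → ℝ :=
  fun p => (pdx (pdy f) p + (Qf f p ^ 2 - Pf f p ^ 2) / 2) / Wf f p

/-- Second fundamental form coefficient `N = (f_yy − PQ)/W`. -/
def Nf (f : ℝ × ℝ → ℝ) : ℝ × ℝ → ℝ := fun p => (pdy (pdy f) p - Pf f p * Qf f p) / Wf f p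

/-- Mean curvature `H = (EN − 2FM + GL)/(2W²)`. -/
def Hf (f : ℝ × ℝ → ℝ) : ℝ × ℝ → ℝ :=
  fun p => (Ef f p * Nf f p - 2 * Ff f p * Mf f p + Gf f p * Lf f p) / (2 * Wf f p ^ 2)

/-- The Laplace–Beltrami operator of the graph of `f`, with the sign convention
`Δφ = −(1/W)[∂_x((G φ_x − F φ_y)/W) + ∂_y((−F φ_x + E φ_y)/W)]`. -/
def lapS (f φ : ℝ × ℝ → ℝ) : ℝ × ℝ → ℝ := fun p =>
  -(1 / Wf f p) *
    (pdx (fun q => (Gf f q * pdx φ q - Ff f q * pdy φ q) / Wf f q) p +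
     pdy (fun q => (-(Ff f q) * pdx φ q + Ef f q * pdy φ q) / Wf f q) p)

/-- Mean curvature in the form `H = (f_xx + f_yy)/(2W³)`. -/
def Hm (f : ℝ × ℝ → ℝ) : ℝ × ℝ → ℝ :=
  fun p => (pdx (pdx f) p + pdy (pdy f) p) / (2 * Wf f p ^ 3)

/-- `H₁ = (f_xx + f_yy)/W`. -/
def H1f (f : ℝ × ℝ → ℝ) : ℝ × ℝ → ℝ :=
  fun p => (pdx (pdx f) p + pdy (pdy f) p) / Wf f p

/-!
Multiplying the Laplace–Beltrami operator by `W⁴ = (1 + P² + Q²)²` turns `Δx`, `Δy`, `Δf` into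
polynomials in the 2-jet of `f`. On a ruled graph, `Q = −uP`, the Heisenberg relation
`Q_x − P_y = −1` and the Burgers equation express that jet through `P, P_x, u, u_x`, and with
`T = f_xx + f_yy` one finds
`W⁴Δx = P(T − uW²)`, `W⁴Δy = −P(W² + uT)`, `W⁴Δf = −T + W⁴(xΔy − yΔx)/2`.
So `λ₁ = 0` and `P ≠ 0` give `T = uW²`; then `W⁴Δy = −PW²(1 + u²) ≠ 0` forces `λ₂ ≠ 0`, and the
equation for `Δf` becomes the stated PDE.
-/

open Real Filter Topology

section Calculus

variable {p : ℝ × ℝ}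

theorem differentiableAt_fderiv_apply {g : ℝ × ℝ → ℝ} (hg : ContDiffAt ℝ 2 g p) (w : ℝ × ℝ) :
    DifferentiableAt ℝ (fun q => fderiv ℝ g q w) p :=
  ((hg.fderiv_right (m := 1) (by norm_num)).differentiableAt one_ne_zero).clm_apply
    (differentiableAt_const w)

theorem fderiv_fderiv_apply_comm {g : ℝ × ℝ → ℝ} (hg : ContDiffAt ℝ 2 g p) (v w : ℝ × ℝ) :
    fderiv ℝ (fun q => fderiv ℝ g q w) p v = fderiv ℝ (fun q => fderiv ℝ g q v) p w := by
  have hd := (hg.fderiv_right (m := 1) (by norm_num)).differentiableAt one_ne_zero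
  rw [fderiv_clm_apply hd (differentiableAt_const w), fderiv_clm_apply hd (differentiableAt_const v)]
  simpa using hg.isSymmSndFDerivAt (by simp [minSmoothness_of_isRCLikeNormedField]) v w

theorem fderiv_div_sqrt_apply {N V : ℝ × ℝ → ℝ} (hN : DifferentiableAt ℝ N p)
    (hV : DifferentiableAt ℝ V p) (hVp : 0 < V p) (v : ℝ × ℝ) :
    fderiv ℝ (fun q => N q / √(V q)) p v =
      (fderiv ℝ N p v * V p - N p * fderiv ℝ V p v / 2) / (V p * √(V p)) := by
  have hs : √(V p) ≠ 0 := (sqrt_pos.2 hVp).ne'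
  have hinv : HasFDerivAt (fun q => (√(V q))⁻¹) _ p :=
    (hasDerivAt_inv hs).comp_hasFDerivAt p (hV.hasFDerivAt.sqrt hVp.ne')
  rw [show (fun q => N q / √(V q)) = fun q => N q * (√(V q))⁻¹ from
      funext fun q => div_eq_mul_inv _ _,
    (hN.hasFDerivAt.fun_mul hinv).fderiv]
  simp only [add_apply, smul_apply, smul_eq_mul]
  field_simp
  rw [sq_sqrt hVp.le]
  ring

theorem divergence_div_sqrt_mul_sq {N₁ N₂ V : ℝ × ℝ → ℝ} (h₁ : DifferentiableAt ℝ N₁ p)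
    (h₂ : DifferentiableAt ℝ N₂ p) (hV : DifferentiableAt ℝ V p) (hVp : 0 < V p) :
    -(1 / √(V p)) * (pdx (fun q => N₁ q / √(V q)) p + pdy (fun q => N₂ q / √(V q)) p) *
        V p ^ 2 =
      (N₁ p * pdx V p + N₂ p * pdy V p) / 2 - V p * (pdx N₁ p + pdy N₂ p) := by
  simp only [pdx, pdy]
  rw [fderiv_div_sqrt_apply h₁ hV hVp, fderiv_div_sqrt_apply h₂ hV hVp]
  field_simp
  rw [sq_sqrt hVp.le]
  ring

end Calculus

theorem pdx_apply (g : ℝ × ℝ → ℝ) (p : ℝ × ℝ) : pdx g p = fderiv ℝ g p (1, 0) := rfl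

theorem pdy_apply (g : ℝ × ℝ → ℝ) (p : ℝ × ℝ) : pdy g p = fderiv ℝ g p (0, 1) := rfl

@[simp] theorem pdx_const (c : ℝ) : pdx (fun _ => c) = fun _ => 0 := by
  ext; simp [pdx]

@[simp] theorem pdy_const (c : ℝ) : pdy (fun _ => c) = fun _ => 0 := by
  ext; simp [pdy]

@[simp] theorem pdx_fst : pdx (fun q : ℝ × ℝ => q.1) = fun _ => 1 := by
  ext; simp [pdx, fderiv_fst]

@[simp] theorem pdy_fst : pdy (fun q : ℝ × ℝ => q.1) = fun _ => 0 := by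
  ext; simp [pdy, fderiv_fst]

@[simp] theorem pdx_snd : pdx (fun q : ℝ × ℝ => q.2) = fun _ => 0 := by
  ext; simp [pdx, fderiv_snd]

@[simp] theorem pdy_snd : pdy (fun q : ℝ × ℝ => q.2) = fun _ => 1 := by
  ext; simp [pdy, fderiv_snd]

section Graph

variable {f φ : ℝ × ℝ → ℝ} {p : ℝ × ℝ}

theorem lapS_mul_sq (hP : DifferentiableAt ℝ (Pf f) p) (hQ : DifferentiableAt ℝ (Qf f) p)
    (hφx : DifferentiableAt ℝ (pdx φ) p) (hφy : DifferentiableAt ℝ (pdy φ) p) :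
    lapS f φ p * (1 + Pf f p ^ 2 + Qf f p ^ 2) ^ 2 =
      (Pf f p * pdx (Pf f) p + Qf f p * pdx (Qf f) p) *
          ((1 + Qf f p ^ 2) * pdx φ p - Pf f p * Qf f p * pdy φ p) +
        (Pf f p * pdy (Pf f) p + Qf f p * pdy (Qf f) p) *
          ((1 + Pf f p ^ 2) * pdy φ p - Pf f p * Qf f p * pdx φ p) -
        (1 + Pf f p ^ 2 + Qf f p ^ 2) *
          ((1 + Qf f p ^ 2) * pdx (pdx φ) p + (1 + Pf f p ^ 2) * pdy (pdy φ) p -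
            Pf f p * Qf f p * (pdx (pdy φ) p + pdy (pdx φ) p) +
            (2 * Qf f p * pdx (Qf f) p - Pf f p * pdy (Qf f) p - pdy (Pf f) p * Qf f p) * pdx φ p +
            (2 * Pf f p * pdy (Pf f) p - Pf f p * pdx (Qf f) p - pdx (Pf f) p * Qf f p) *
              pdy φ p) := by
  have h := divergence_div_sqrt_mul_sq (p := p)
    (N₁ := fun q => (1 + Qf f q ^ 2) * pdx φ q - Pf f q * Qf f q * pdy φ q)
    (N₂ := fun q => -(Pf f q * Qf f q) * pdx φ q + (1 + Pf f q ^ 2) * pdy φ q)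
    (V := fun q => 1 + Pf f q ^ 2 + Qf f q ^ 2) (by fun_prop) (by fun_prop) (by fun_prop)
    (by positivity)
  change lapS f φ p * _ = _ at h
  rw [h]
  generalize pdx φ = A at hφx ⊢
  generalize pdy φ = B at hφy ⊢
  generalize Pf f = P at hP ⊢
  generalize Qf f = Q at hQ ⊢
  simp only [pdx, pdy]
  simp (disch := fun_prop) only [fderiv_fun_sub, fderiv_fun_mul, fderiv_fun_add, fderiv_fun_pow,
    fderiv_fun_neg, fderiv_const_apply]
  simp
  ring

theorem fderiv_Pf_apply (hfx : DifferentiableAt ℝ (pdx f) p) (v : ℝ × ℝ) :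
    fderiv ℝ (Pf f) p v = fderiv ℝ (pdx f) p v + v.2 / 2 := by
  unfold Pf
  simp (disch := fun_prop) [fderiv_fun_add, div_eq_mul_inv, fderiv_mul_const, fderiv_snd,
    mul_comm]

theorem fderiv_Qf_apply (hfy : DifferentiableAt ℝ (pdy f) p) (v : ℝ × ℝ) :
    fderiv ℝ (Qf f) p v = fderiv ℝ (pdy f) p v - v.1 / 2 := by
  unfold Qf
  simp (disch := fun_prop) [fderiv_fun_sub, div_eq_mul_inv, fderiv_mul_const, fderiv_fst,
    mul_comm]

theorem differentiableAt_Pf (hf : ContDiffAt ℝ 2 f p) : DifferentiableAt ℝ (Pf f) p := by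
  have : DifferentiableAt ℝ (pdx f) p := differentiableAt_fderiv_apply hf _
  unfold Pf; fun_prop

theorem differentiableAt_Qf (hf : ContDiffAt ℝ 2 f p) : DifferentiableAt ℝ (Qf f) p := by
  have : DifferentiableAt ℝ (pdy f) p := differentiableAt_fderiv_apply hf _
  unfold Qf; fun_prop

theorem pdx_eq_Pf_sub (f : ℝ × ℝ → ℝ) (p : ℝ × ℝ) : pdx f p = Pf f p - p.2 / 2 := by
  simp [Pf]

theorem pdy_eq_Qf_add (f : ℝ × ℝ → ℝ) (p : ℝ × ℝ) : pdy f p = Qf f p + p.1 / 2 := by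
  simp [Qf]

theorem pdx_pdx_eq (hf : ContDiffAt ℝ 2 f p) : pdx (pdx f) p = pdx (Pf f) p := by
  simp [pdx_apply, fderiv_Pf_apply (differentiableAt_fderiv_apply hf (1, 0))]

theorem pdy_pdx_eq (hf : ContDiffAt ℝ 2 f p) : pdy (pdx f) p = pdy (Pf f) p - 1 / 2 := by
  simp [pdy_apply, fderiv_Pf_apply (differentiableAt_fderiv_apply hf (1, 0))]

theorem pdx_pdy_eq (hf : ContDiffAt ℝ 2 f p) : pdx (pdy f) p = pdx (Qf f) p + 1 / 2 := by
  simp [pdx_apply, fderiv_Qf_apply (differentiableAt_fderiv_apply hf (0, 1))]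

theorem pdy_pdy_eq (hf : ContDiffAt ℝ 2 f p) : pdy (pdy f) p = pdy (Qf f) p := by
  simp [pdy_apply, fderiv_Qf_apply (differentiableAt_fderiv_apply hf (0, 1))]

-- The `−1` is the curvature of the contact form: `dω = −dx ∧ dy`.
theorem pdx_Qf (hf : ContDiffAt ℝ 2 f p) : pdx (Qf f) p = pdy (Pf f) p - 1 := by
  have hsymm : pdx (pdy f) p = pdy (pdx f) p := fderiv_fderiv_apply_comm hf (1, 0) (0, 1)
  linarith [pdx_pdy_eq hf, pdy_pdx_eq hf]

theorem H1f_eq_mul_Wf {c : ℝ}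
    (hT : pdx (pdx f) p + pdy (pdy f) p = c * (1 + Pf f p ^ 2 + Qf f p ^ 2)) :
    H1f f p = c * Wf f p := by
  have hV : 0 < 1 + Pf f p ^ 2 + Qf f p ^ 2 := by positivity
  have hW : Wf f p ^ 2 = 1 + Pf f p ^ 2 + Qf f p ^ 2 := sq_sqrt hV.le
  have hW0 : Wf f p ≠ 0 := (sqrt_pos.2 hV).ne'
  rw [H1f, hT, ← hW]
  field_simp

end Graph

section Ruled

variable {f u : ℝ × ℝ → ℝ} {p : ℝ × ℝ}

theorem fderiv_Qf_apply_of_eventuallyEq (hP : DifferentiableAt ℝ (Pf f) p)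
    (hu : DifferentiableAt ℝ u p) (hruled : Qf f =ᶠ[𝓝 p] fun q => -(u q) * Pf f q)
    (v : ℝ × ℝ) :
    fderiv ℝ (Qf f) p v = -(fderiv ℝ u p v * Pf f p + u p * fderiv ℝ (Pf f) p v) := by
  rw [hruled.fderiv_eq]
  simp (disch := fun_prop) [fderiv_fun_mul]
  ring

end Ruled

structure IsRuledGraphAt (f u : ℝ × ℝ → ℝ) (p : ℝ × ℝ) : Prop where
  contDiffAt : ContDiffAt ℝ 2 f p
  differentiableAt : DifferentiableAt ℝ u p
  ruled : Qf f =ᶠ[𝓝 p] fun q => -(u q) * Pf f q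
  burgers : pdy u p + u p * pdx u p = 0

theorem isRuledGraphAt_of_mem {D : Set (ℝ × ℝ)} {f u : ℝ × ℝ → ℝ} (hD : IsOpen D)
    (hf : ContDiffOn ℝ 2 f D) (hu : DifferentiableOn ℝ u D)
    (hruled : ∀ p ∈ D, Qf f p = -(u p) * Pf f p)
    (hburgers : ∀ p ∈ D, pdy u p + u p * pdx u p = 0) {p : ℝ × ℝ} (hp : p ∈ D) :
    IsRuledGraphAt f u p where
  contDiffAt := hf.contDiffAt (hD.mem_nhds hp)
  differentiableAt := hu.differentiableAt (hD.mem_nhds hp)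
  ruled := eventuallyEq_of_mem (hD.mem_nhds hp) hruled
  burgers := hburgers p hp

namespace IsRuledGraphAt

variable {f u : ℝ × ℝ → ℝ} {p : ℝ × ℝ}

theorem two_jet (h : IsRuledGraphAt f u p) :
    Qf f p = -(u p * Pf f p) ∧
    pdy (Pf f) p = 1 - pdx u p * Pf f p - u p * pdx (Pf f) p ∧
    pdx (Qf f) p = -(pdx u p * Pf f p) - u p * pdx (Pf f) p ∧
    pdy (Qf f) p = 2 * u p * pdx u p * Pf f p - u p + u p ^ 2 * pdx (Pf f) p := by
  have hP := differentiableAt_Pf h.contDiffAt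
  have hQx := fderiv_Qf_apply_of_eventuallyEq hP h.differentiableAt h.ruled (1, 0)
  have hQy := fderiv_Qf_apply_of_eventuallyEq hP h.differentiableAt h.ruled (0, 1)
  have hbracket := pdx_Qf h.contDiffAt
  have hburgers := h.burgers
  simp only [pdx, pdy] at hbracket hburgers ⊢
  refine ⟨by rw [h.ruled.self_of_nhds]; ring, by linarith, by linarith, ?_⟩
  rw [hQy]
  linear_combination -Pf f p * hburgers + u p * hbracket - u p * hQx

theorem lapS_fst_mul_sq (h : IsRuledGraphAt f u p) :
    lapS f (fun q => q.1) p * (1 + Pf f p ^ 2 + Qf f p ^ 2) ^ 2 =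
      Pf f p * (pdx (pdx f) p + pdy (pdy f) p - u p * (1 + Pf f p ^ 2 + Qf f p ^ 2)) := by
  obtain ⟨hQ, hPy, hQx, hQy⟩ := h.two_jet
  have hf := h.contDiffAt
  rw [lapS_mul_sq (differentiableAt_Pf hf) (differentiableAt_Qf hf) (by simp) (by simp)]
  simp only [pdx_fst, pdy_fst, pdx_const, pdy_const]
  rw [pdx_pdx_eq hf, pdy_pdy_eq hf, hPy, hQx, hQy, hQ]
  ring

theorem lapS_snd_mul_sq (h : IsRuledGraphAt f u p) :
    lapS f (fun q => q.2) p * (1 + Pf f p ^ 2 + Qf f p ^ 2) ^ 2 =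
      -(Pf f p * (1 + Pf f p ^ 2 + Qf f p ^ 2 + u p * (pdx (pdx f) p + pdy (pdy f) p))) := by
  obtain ⟨hQ, hPy, hQx, hQy⟩ := h.two_jet
  have hf := h.contDiffAt
  rw [lapS_mul_sq (differentiableAt_Pf hf) (differentiableAt_Qf hf) (by simp) (by simp)]
  simp only [pdx_snd, pdy_snd, pdx_const, pdy_const]
  rw [pdx_pdx_eq hf, pdy_pdy_eq hf, hPy, hQx, hQy, hQ]
  ring

theorem lapS_self_mul_sq (h : IsRuledGraphAt f u p) :
    lapS f f p * (1 + Pf f p ^ 2 + Qf f p ^ 2) ^ 2 =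
      -(pdx (pdx f) p + pdy (pdy f) p) +
        (p.1 * lapS f (fun q => q.2) p - p.2 * lapS f (fun q => q.1) p) / 2 *
          (1 + Pf f p ^ 2 + Qf f p ^ 2) ^ 2 := by
  have hx := h.lapS_fst_mul_sq
  have hy := h.lapS_snd_mul_sq
  obtain ⟨hQ, hPy, hQx, hQy⟩ := h.two_jet
  have hf := h.contDiffAt
  rw [lapS_mul_sq (differentiableAt_Pf hf) (differentiableAt_Qf hf)
    (differentiableAt_fderiv_apply hf _) (differentiableAt_fderiv_apply hf _)]
  rw [pdx_pdy_eq hf, pdy_pdx_eq hf, pdx_pdx_eq hf, pdy_pdy_eq hf, pdx_eq_Pf_sub f p,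
    pdy_eq_Qf_add f p]
  rw [pdx_pdx_eq hf, pdy_pdy_eq hf] at hx hy
  simp only [hPy, hQx, hQy, hQ] at hx hy ⊢
  linear_combination (p.2 / 2) * hx - (p.1 / 2) * hy

theorem trace_eq_of_lapS_fst_eq_zero (h : IsRuledGraphAt f u p)
    (hx : lapS f (fun q => q.1) p = 0) (hP : Pf f p ≠ 0) :
    pdx (pdx f) p + pdy (pdy f) p = u p * (1 + Pf f p ^ 2 + Qf f p ^ 2) := by
  have h0 := h.lapS_fst_mul_sq
  rw [hx, zero_mul, eq_comm, mul_eq_zero] at h0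
  exact sub_eq_zero.1 (h0.resolve_left hP)

end IsRuledGraphAt

theorem finite_type_S2_case_l3_ne_zero_l1_zero_general
    (D : Set (ℝ × ℝ)) (hD : IsOpen D) (hDne : D.Nonempty)
    (f : ℝ × ℝ → ℝ) (hf : ContDiffOn ℝ (⊤ : ℕ∞) f D)
    (u : ℝ × ℝ → ℝ) (hu : ContDiffOn ℝ (⊤ : ℕ∞) u D)
    (hruled : ∀ p ∈ D, Qf f p = -(u p) * Pf f p)
    (hburgers : ∀ p ∈ D, pdy u p + u p * pdx u p = 0)
    (l1 l2 l3 : ℝ)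
    (h1 : ∀ p ∈ D, lapS f (fun q => q.1) p = l1 * p.1)
    (h2 : ∀ p ∈ D, lapS f (fun q => q.2) p = l2 * p.2)
    (h3 : ∀ p ∈ D, lapS f f p = l3 * f p)
    (hl1 : l1 = 0)
    (hP : ∀ p ∈ D, Pf f p ≠ 0) :
    (∀ p ∈ D,
      H1f f p = u p * Wf f p ∧
      pdx (pdx f) p + pdy (pdy f) p = u p * (1 + Pf f p ^ 2 * (1 + u p ^ 2))) ∧
    l2 ≠ 0 ∧
    (∀ p ∈ D,
      pdx (pdx f) p + pdy (pdy f) p =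
        (1 / 2) * (l2 * (p.1 * p.2) - 2 * l3 * f p) *
          (1 + (pdx f p + p.2 / 2) ^ 2 * (1 + u p ^ 2)) ^ 2) := by
  have hR : ∀ p ∈ D, IsRuledGraphAt f u p := fun p hp =>
    isRuledGraphAt_of_mem hD (hf.of_le (WithTop.coe_le_coe.2 le_top))
      (hu.differentiableOn (by simp)) hruled hburgers hp
  have hV : ∀ p ∈ D, 1 + Pf f p ^ 2 + Qf f p ^ 2 = 1 + Pf f p ^ 2 * (1 + u p ^ 2) :=
    fun p hp => by rw [hruled p hp]; ring
  have hT : ∀ p ∈ D, pdx (pdx f) p + pdy (pdy f) p = u p * (1 + Pf f p ^ 2 + Qf f p ^ 2) :=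
    fun p hp => (hR p hp).trace_eq_of_lapS_fst_eq_zero (by rw [h1 p hp, hl1, zero_mul]) (hP p hp)
  refine ⟨fun p hp => ⟨H1f_eq_mul_Wf (hT p hp), by rw [hT p hp, hV p hp]⟩, ?_, fun p hp => ?_⟩
  · obtain ⟨p, hp⟩ := hDne
    rintro rfl
    have hy := (hR p hp).lapS_snd_mul_sq
    rw [h2 p hp, hT p hp] at hy
    have hpos : 0 < (1 + Pf f p ^ 2 + Qf f p ^ 2) * (1 + u p ^ 2) := by positivity
    refine hP p hp ((mul_eq_zero.1 ?_).resolve_right hpos.ne')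
    linear_combination hy
  · have hself := (hR p hp).lapS_self_mul_sq
    rw [h1 p hp, h2 p hp, h3 p hp, hl1] at hself
    rw [show pdx f p + p.2 / 2 = Pf f p from rfl, ← hV p hp]
    linear_combination hself

/-- **Second family, case `λ₃ ≠ 0`, `λ₁ = 0`** (equation (3.10)): under the ruled hypothesis
`Q = −uP`, `u_y + u·u_x = 0`, if `Δx = λ₁x`, `Δy = λ₂y`, `Δf = λ₃f` on `D` with `λ₃ ≠ 0`,
`λ₁ = 0`, and `P` nowhere zero on `D`, then `H₁ = uW`, i.e.
`f_xx + f_yy = u(1 + P²(1 + u²))`, the constant `λ₂` is nonzero, and `f` satisfies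
`f_xx + f_yy = ½(λ₂xy − 2λ₃f)(1 + (f_x + y/2)²(1 + u²))²` on `D`. -/
theorem finite_type_S2_case_l3_ne_zero_l1_zero
    (D : Set (ℝ × ℝ)) (hD : IsOpen D) (hDne : D.Nonempty)
    (f : ℝ × ℝ → ℝ) (hf : ContDiffOn ℝ (⊤ : ℕ∞) f D)
    (u : ℝ × ℝ → ℝ) (hu : ContDiffOn ℝ (⊤ : ℕ∞) u D)
    (hruled : ∀ p ∈ D, Qf f p = -(u p) * Pf f p)
    (hburgers : ∀ p ∈ D, pdy u p + u p * pdx u p = 0)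
    (l1 l2 l3 : ℝ)
    (h1 : ∀ p ∈ D, lapS f (fun q => q.1) p = l1 * p.1)
    (h2 : ∀ p ∈ D, lapS f (fun q => q.2) p = l2 * p.2)
    (h3 : ∀ p ∈ D, lapS f f p = l3 * f p)
    (hl3 : l3 ≠ 0) (hl1 : l1 = 0)
    (hP : ∀ p ∈ D, Pf f p ≠ 0) :
    (∀ p ∈ D,
      H1f f p = u p * Wf f p ∧
      pdx (pdx f) p + pdy (pdy f) p = u p * (1 + Pf f p ^ 2 * (1 + u p ^ 2))) ∧
    l2 ≠ 0 ∧
    (∀ p ∈ D,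
      pdx (pdx f) p + pdy (pdy f) p =
        (1 / 2) * (l2 * (p.1 * p.2) - 2 * l3 * f p) *
          (1 + (pdx f p + p.2 / 2) ^ 2 * (1 + u p ^ 2)) ^ 2) :=
  finite_type_S2_case_l3_ne_zero_l1_zero_general D hD hDne f hf u hu hruled hburgers l1 l2 l3 h1 h2
    h3 hl1 hP
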